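/- arXiv:1812.07265 — 7 statements merged into one kernel-verified Lean document; each statement's English description precedes it below -/
import Mathlib

section
/- Let X and X' be n×n positive semidefinite real matrices with ‖X − X'‖_F ≤ ε. Then the matrix square roots satisfy ‖√X − √X'‖_F ≤ √(n·ε). -/
/-!
Write `C = √X - √X'` and `S = √X + √X'`. For a unit eigenvector `v` of `C` with eigenvalue `μ`,
symmetry of the square roots gives `vᵀ(X - X')v = μ · vᵀSv`, while `S + C = 2√X` and
`S - C = 2√X'` are positive semidefinite, so `|μ| ≤ vᵀSv`. Hence
`μ² ≤ |vᵀ(X - X')v| ≤ ‖X - X'‖_F ≤ ε`, and `‖C‖_F²` is the sum of the `n` squared eigenvalues.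
-/

/-- Frobenius norm of a real matrix. -/
noncomputable def frobNorm {n : ℕ} (A : Matrix (Fin n) (Fin n) ℝ) : ℝ :=
  Real.sqrt (∑ i, ∑ j, (A i j) ^ 2)

/-- The positive semidefinite square root of a positive semidefinite matrix (removed from
Mathlib; restored with its old definition). -/
noncomputable def Matrix.PosSemidef.sqrt {n : Type*} [Fintype n] [DecidableEq n]
    {A : Matrix n n ℝ} (hA : A.PosSemidef) : Matrix n n ℝ :=
  (hA.1.eigenvectorUnitary : Matrix n n ℝ) * Matrix.diagonal ((↑) ∘ Real.sqrt ∘ hA.1.eigenvalues) *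
    (star hA.1.eigenvectorUnitary : Matrix n n ℝ)

open Matrix Unitary

namespace Matrix

variable {m : Type*} [Fintype m]

namespace PosSemidef

variable [DecidableEq m] {A : Matrix m m ℝ}

lemma sqrt_eq_conjStarAlgAut (hA : A.PosSemidef) :
    hA.sqrt = conjStarAlgAut ℝ _ hA.1.eigenvectorUnitary
      (diagonal (Real.sqrt ∘ hA.1.eigenvalues)) :=
  rfl

lemma posSemidef_sqrt (hA : A.PosSemidef) : hA.sqrt.PosSemidef := by
  have hD : (diagonal (Real.sqrt ∘ hA.1.eigenvalues)).PosSemidef :=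
    posSemidef_diagonal_iff.mpr fun i => Real.sqrt_nonneg _
  simpa [sqrt_eq_conjStarAlgAut, star_eq_conjTranspose, Matrix.mul_assoc] using
    hD.mul_mul_conjTranspose_same (hA.1.eigenvectorUnitary : Matrix m m ℝ)

lemma sqrt_mul_self (hA : A.PosSemidef) : hA.sqrt * hA.sqrt = A := by
  conv_rhs => rw [hA.1.spectral_theorem]
  rw [sqrt_eq_conjStarAlgAut, ← map_mul, diagonal_mul_diagonal]
  congr 2
  funext i
  simp [Real.mul_self_sqrt (hA.eigenvalues_nonneg i)]

end PosSemidef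

lemma IsSymm.vecMul_eq_mulVec {R : Type*} [CommSemiring R] {P : Matrix m m R} (hP : P.IsSymm)
    (v : m → R) : v ᵥ* P = P *ᵥ v := by
  rw [← vecMul_transpose, hP.eq]

lemma IsSymm.dotProduct_mul_mulVec_comm {R : Type*} [CommSemiring R] {P Q : Matrix m m R}
    (hP : P.IsSymm) (hQ : Q.IsSymm) (v : m → R) :
    v ⬝ᵥ (P * Q) *ᵥ v = v ⬝ᵥ (Q * P) *ᵥ v := by
  simp only [← mulVec_mulVec, dotProduct_mulVec v P, dotProduct_mulVec v Q, hP.vecMul_eq_mulVec,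
    hQ.vecMul_eq_mulVec, dotProduct_comm]

lemma IsHermitian.sum_sq_eq_sum_sq_eigenvalues [DecidableEq m] {C : Matrix m m ℝ}
    (hC : C.IsHermitian) : ∑ i, ∑ j, C i j ^ 2 = ∑ j, hC.eigenvalues j ^ 2 := by
  have htrace : ∑ i, ∑ j, C i j ^ 2 = (C * C).trace := by
    simp only [trace, diag_apply, mul_apply, sq, (isHermitian_iff_isSymm.mp hC).apply]
  have hsq : C * C = conjStarAlgAut ℝ _ hC.eigenvectorUnitary
      (diagonal fun j => hC.eigenvalues j ^ 2) := by
    conv_lhs => rw [hC.spectral_theorem]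
    rw [← map_mul, diagonal_mul_diagonal]
    simp [sq]
  rw [htrace, hsq, conjStarAlgAut_apply, trace_mul_cycle, coe_star_mul_self, Matrix.one_mul,
    trace_diagonal]

lemma IsHermitian.dotProduct_eigenvectorBasis_self [DecidableEq m] {C : Matrix m m ℝ}
    (hC : C.IsHermitian) (j : m) :
    ⇑(hC.eigenvectorBasis j) ⬝ᵥ ⇑(hC.eigenvectorBasis j) = 1 := by
  have h := real_inner_self_eq_norm_sq (hC.eigenvectorBasis j)
  rw [hC.eigenvectorBasis.orthonormal.1 j, EuclideanSpace.inner_eq_star_dotProduct] at h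
  simpa using h

section SquareDifference

variable {P Q : Matrix m m ℝ} {v : m → ℝ} {μ : ℝ}

lemma IsSymm.dotProduct_mul_self_sub_mul_self_mulVec (hP : P.IsSymm) (hQ : Q.IsSymm)
    (hv : (P - Q) *ᵥ v = μ • v) :
    v ⬝ᵥ (P * P - Q * Q) *ᵥ v = μ * (v ⬝ᵥ (P + Q) *ᵥ v) := by
  have hfactor : P * P - Q * Q = (P + Q) * (P - Q) + (P * Q - Q * P) := by noncomm_ring
  rw [hfactor, add_mulVec, sub_mulVec, dotProduct_add, dotProduct_sub,
    hP.dotProduct_mul_mulVec_comm hQ, sub_self, add_zero, ← mulVec_mulVec, hv, mulVec_smul,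
    dotProduct_smul, smul_eq_mul]

lemma PosSemidef.abs_le_dotProduct_add_mulVec (hP : P.PosSemidef) (hQ : Q.PosSemidef)
    (hv1 : v ⬝ᵥ v = 1) (hv : (P - Q) *ᵥ v = μ • v) : |μ| ≤ v ⬝ᵥ (P + Q) *ᵥ v := by
  have hμ : v ⬝ᵥ (P - Q) *ᵥ v = μ := by rw [hv, dotProduct_smul, hv1, smul_eq_mul, mul_one]
  have hPv := hP.dotProduct_mulVec_nonneg v
  have hQv := hQ.dotProduct_mulVec_nonneg v
  simp only [star_trivial, add_mulVec, sub_mulVec, dotProduct_add, dotProduct_sub] at hμ hPv hQv ⊢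
  rw [abs_le]
  constructor <;> linarith

lemma PosSemidef.sq_le_abs_dotProduct_mul_self_sub_mul_self_mulVec (hP : P.PosSemidef)
    (hQ : Q.PosSemidef) (hv1 : v ⬝ᵥ v = 1) (hv : (P - Q) *ᵥ v = μ • v) :
    μ ^ 2 ≤ |v ⬝ᵥ (P * P - Q * Q) *ᵥ v| := by
  have hle := hP.abs_le_dotProduct_add_mulVec hQ hv1 hv
  rw [(isHermitian_iff_isSymm.mp hP.1).dotProduct_mul_self_sub_mul_self_mulVec
    (isHermitian_iff_isSymm.mp hQ.1) hv, abs_mul]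
  calc μ ^ 2 = |μ| * |μ| := by rw [abs_mul_abs_self, sq]
    _ ≤ |μ| * |v ⬝ᵥ (P + Q) *ᵥ v| :=
      mul_le_mul_of_nonneg_left (hle.trans (le_abs_self _)) (abs_nonneg μ)

end SquareDifference

end Matrix

lemma abs_dotProduct_mulVec_le_frobNorm {n : ℕ} (M : Matrix (Fin n) (Fin n) ℝ) {v : Fin n → ℝ}
    (hv1 : v ⬝ᵥ v = 1) : |v ⬝ᵥ M *ᵥ v| ≤ frobNorm M := by
  have hsum_sq : ∑ i, v i ^ 2 = 1 := by simpa [dotProduct, sq] using hv1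
  have hrow : ∀ i, (M *ᵥ v) i ^ 2 ≤ ∑ j, M i j ^ 2 := fun i => by
    simpa [hsum_sq, mulVec, dotProduct] using Finset.sum_mul_sq_le_sq_mul_sq Finset.univ (M i) v
  have hsq : (v ⬝ᵥ M *ᵥ v) ^ 2 ≤ ∑ i, ∑ j, M i j ^ 2 :=
    calc (v ⬝ᵥ M *ᵥ v) ^ 2 ≤ (∑ i, v i ^ 2) * ∑ i, (M *ᵥ v) i ^ 2 :=
          Finset.sum_mul_sq_le_sq_mul_sq _ _ _
      _ ≤ ∑ i, ∑ j, M i j ^ 2 := by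
          rw [hsum_sq, one_mul]
          exact Finset.sum_le_sum fun i _ => hrow i
  rw [← Real.sqrt_sq_eq_abs]
  exact Real.sqrt_le_sqrt hsq

/-- If `X, X'` are `n × n` positive semidefinite real matrices with
`‖X - X'‖_F ≤ ε`, then `‖√X - √X'‖_F ≤ √(n·ε)`. -/
theorem sqrt_matrices_close {n : ℕ} (X X' : Matrix (Fin n) (Fin n) ℝ) (ε : ℝ)
    (hX : X.PosSemidef) (hX' : X'.PosSemidef)
    (hXX' : frobNorm (X - X') ≤ ε) :
    frobNorm (hX.sqrt - hX'.sqrt) ≤ Real.sqrt (n * ε) := by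
  have hC : (hX.sqrt - hX'.sqrt).IsHermitian := hX.posSemidef_sqrt.1.sub hX'.posSemidef_sqrt.1
  have heigenvalue : ∀ j, hC.eigenvalues j ^ 2 ≤ ε := fun j => by
    have hunit := hC.dotProduct_eigenvectorBasis_self j
    have h := hX.posSemidef_sqrt.sq_le_abs_dotProduct_mul_self_sub_mul_self_mulVec
      hX'.posSemidef_sqrt hunit (hC.mulVec_eigenvectorBasis j)
    rw [hX.sqrt_mul_self, hX'.sqrt_mul_self] at h
    exact h.trans ((abs_dotProduct_mulVec_le_frobNorm _ hunit).trans hXX')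
  rw [frobNorm, hC.sum_sq_eq_sum_sq_eigenvalues]
  refine Real.sqrt_le_sqrt ?_
  calc ∑ j, hC.eigenvalues j ^ 2 ≤ ∑ _j : Fin n, ε := Finset.sum_le_sum fun j _ => heigenvalue j
    _ = n * ε := by simp
end

section
/- Let X, X' be n×n positive semidefinite matrices over ℂ with ‖X − X'‖_F ≤ ε. If V and V' are n×n matrices with X = V V† and X' = V' (V')†, then there exists a unitary matrix U ∈ ℂ^{n×n} such that ‖V U − V'‖_F ≤ √(n·ε). In particular, the rows (Gram decomposition vectors) of V U and V' are pairwise within √(n·ε) in 2-norm. -/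
/-! Any two square factors of the same Gram matrix differ by a unitary, so `V = √X U₁` and
`W = √X' U₂` with `U₁, U₂` unitary, and `V U₁⁻¹ U₂ - W = (√X - √X') U₂`. Its Frobenius norm is that
of `D = √X - √X'`, i.e. `∑ λᵢ²` over the eigenvalues of `D`. For a unit eigenvector `w` of `D`
with eigenvalue `λ`, the identity `X - X' = √X D + D √X'` gives
`w*(X - X')w = λ (w*√X w + w*√X' w)`, while `|λ| = |w*√X w - w*√X' w|` is at most the bracket;
hence `λ² ≤ |w*(X - X')w| ≤ ‖X - X'‖_F ≤ ε`. -/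

open scoped Matrix ComplexOrder
/-- Frobenius norm of a complex matrix. -/
noncomputable def frobNormC {n : ℕ} (A : Matrix (Fin n) (Fin n) ℂ) : ℝ :=
  Real.sqrt (∑ i, ∑ j, ‖A i j‖ ^ 2)

open scoped InnerProductSpace MatrixOrder

variable {𝕜 : Type*} [RCLike 𝕜]

theorem LinearMap.exists_linearIsometryEquiv_comp_eq_of_norm_apply_eq {E F : Type*}
    [NormedAddCommGroup E] [InnerProductSpace 𝕜 E]
    [NormedAddCommGroup F] [InnerProductSpace 𝕜 F] [FiniteDimensional 𝕜 F]
    {f g : E →ₗ[𝕜] F} (h : ∀ x, ‖f x‖ = ‖g x‖) :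
    ∃ M : F ≃ₗᵢ[𝕜] F, M.toLinearMap ∘ₗ f = g := by
  have hker : ker f ≤ ker g := fun x hx => by
    rw [mem_ker, ← norm_eq_zero, ← h, hx, norm_zero]
  let L : range f →ₗ[𝕜] F := (ker f).liftQ g hker ∘ₗ f.quotKerEquivRange.symm.toLinearMap
  have hL : ∀ x, L ⟨f x, mem_range_self f x⟩ = g x := fun x => by
    simp [L, f.quotKerEquivRange_symm_apply_image]
  have hL_norm : ∀ y, ‖L y‖ = ‖y‖ := by
    rintro ⟨_, x, rfl⟩
    rw [hL, ← h]
    rfl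
  refine ⟨(LinearIsometry.extend ⟨L, hL_norm⟩).toLinearIsometryEquiv rfl, ext fun x => ?_⟩
  exact (LinearIsometry.extend_apply _ ⟨f x, mem_range_self f x⟩).trans (hL x)

namespace Matrix

variable {m n : Type*} [Fintype m] [Fintype n]

theorem sum_norm_sq_eq_trace_mul_conjTranspose (A : Matrix m n 𝕜) :
    ((∑ i, ∑ j, ‖A i j‖ ^ 2 : ℝ) : 𝕜) = (A * Aᴴ).trace := by
  simp [trace, mul_apply, RCLike.mul_conj]

theorem norm_star_dotProduct_mulVec_le (M : Matrix n n 𝕜) (w : n → 𝕜) :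
    ‖star w ⬝ᵥ (M *ᵥ w)‖ ≤ √(∑ i, ∑ j, ‖M i j‖ ^ 2) * ∑ i, ‖w i‖ ^ 2 := by
  have hCS := Finset.sum_mul_sq_le_sq_mul_sq (Finset.univ ×ˢ Finset.univ)
    (fun p : n × n => ‖M p.1 p.2‖) (fun p => ‖w p.1‖ * ‖w p.2‖)
  simp only [Finset.sum_product, mul_pow, ← Finset.mul_sum, ← Finset.sum_mul] at hCS
  calc ‖star w ⬝ᵥ (M *ᵥ w)‖ ≤ ∑ i, ∑ j, ‖M i j‖ * (‖w i‖ * ‖w j‖) := by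
        simp only [dotProduct, mulVec, Pi.star_apply, Finset.mul_sum]
        refine (norm_sum_le _ _).trans (Finset.sum_le_sum fun i _ => ?_)
        refine (norm_sum_le _ _).trans (le_of_eq (Finset.sum_congr rfl fun j _ => ?_))
        rw [norm_mul, norm_mul, norm_star]
        ring
    _ ≤ √(∑ i, ∑ j, ‖M i j‖ ^ 2) * ∑ i, ‖w i‖ ^ 2 := by
        rw [← Real.sqrt_sq (by positivity : 0 ≤ ∑ i, ‖w i‖ ^ 2), ← Real.sqrt_mul (by positivity)]
        exact Real.le_sqrt_of_sq_le (by linarith)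

variable [DecidableEq n]

theorem exists_mem_unitaryGroup_mul_eq_of_mul_conjTranspose_eq [DecidableEq m]
    {A B : Matrix m n 𝕜} (h : A * Aᴴ = B * Bᴴ) : ∃ U ∈ unitaryGroup n 𝕜, A * U = B := by
  have inner_self_eq (C : Matrix m n 𝕜) (x) :
      ⟪toEuclideanLin Cᴴ x, toEuclideanLin Cᴴ x⟫_𝕜 = ⟪x, toEuclideanLin (C * Cᴴ) x⟫_𝕜 := by
    have hadj : toEuclideanLin C = LinearMap.adjoint (toEuclideanLin Cᴴ) := by
      simpa using toEuclideanLin_conjTranspose_eq_adjoint Cᴴ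
    rw [toLpLin_mul_same, LinearMap.comp_apply, hadj, LinearMap.adjoint_inner_right]
  obtain ⟨M, hM⟩ := LinearMap.exists_linearIsometryEquiv_comp_eq_of_norm_apply_eq
    (f := toEuclideanLin Aᴴ) (g := toEuclideanLin Bᴴ) fun x => by
      rw [norm_eq_sqrt_re_inner (𝕜 := 𝕜), norm_eq_sqrt_re_inner (𝕜 := 𝕜), inner_self_eq,
        inner_self_eq, h]
  set U : Matrix n n 𝕜 := toEuclideanLin.symm M.toLinearMap
  have hU : U ∈ unitaryGroup n 𝕜 :=
    M.toMatrix_mem_unitaryGroup (EuclideanSpace.basisFun n 𝕜) (EuclideanSpace.basisFun n 𝕜)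
  have hUA : U * Aᴴ = Bᴴ := toEuclideanLin.injective <| by
    rw [toLpLin_mul_same, ← hM]
    simp [U]
  refine ⟨Uᴴ, Unitary.star_mem hU, ?_⟩
  simpa using congrArg conjTranspose hUA

theorem exists_mem_unitaryGroup_sqrt_mul_eq (A : Matrix n n 𝕜) :
    ∃ U ∈ unitaryGroup n 𝕜, CFC.sqrt (A * Aᴴ) * U = A := by
  apply exists_mem_unitaryGroup_mul_eq_of_mul_conjTranspose_eq
  have hsqrt := nonneg_iff_posSemidef.mp (CFC.sqrt_nonneg (A * Aᴴ))
  rw [hsqrt.1.eq, CFC.sqrt_mul_sqrt_self _ (posSemidef_self_mul_conjTranspose A).nonneg]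

theorem sum_norm_sq_mul_unitary (A : Matrix m n 𝕜) {U : Matrix n n 𝕜}
    (hU : U ∈ unitaryGroup n 𝕜) : ∑ i, ∑ j, ‖(A * U) i j‖ ^ 2 = ∑ i, ∑ j, ‖A i j‖ ^ 2 := by
  apply RCLike.ofReal_injective (K := 𝕜)
  rw [sum_norm_sq_eq_trace_mul_conjTranspose, sum_norm_sq_eq_trace_mul_conjTranspose,
    conjTranspose_mul, Matrix.mul_assoc, ← Matrix.mul_assoc U, ← star_eq_conjTranspose,
    mem_unitaryGroup_iff.mp hU, Matrix.one_mul]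

theorem sum_norm_sq_unitary_mul {U : Matrix n n 𝕜} (hU : U ∈ unitaryGroup n 𝕜)
    (A : Matrix n m 𝕜) : ∑ i, ∑ j, ‖(U * A) i j‖ ^ 2 = ∑ i, ∑ j, ‖A i j‖ ^ 2 := by
  apply RCLike.ofReal_injective (K := 𝕜)
  rw [sum_norm_sq_eq_trace_mul_conjTranspose, sum_norm_sq_eq_trace_mul_conjTranspose,
    conjTranspose_mul, ← Matrix.mul_assoc, Matrix.mul_assoc U, trace_mul_cycle,
    ← star_eq_conjTranspose, mem_unitaryGroup_iff'.mp hU, Matrix.one_mul]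

theorem IsHermitian.sum_norm_sq_eq_sum_eigenvalues_sq {A : Matrix n n 𝕜} (hA : A.IsHermitian) :
    ∑ i, ∑ j, ‖A i j‖ ^ 2 = ∑ i, hA.eigenvalues i ^ 2 := by
  conv_lhs => rw [hA.spectral_theorem, Unitary.conjStarAlgAut_apply]
  rw [sum_norm_sq_mul_unitary _ (Unitary.star_mem hA.eigenvectorUnitary.2),
    sum_norm_sq_unitary_mul hA.eigenvectorUnitary.2]
  simp [diagonal_apply, apply_ite]

theorem PosSemidef.sq_le_norm_star_dotProduct_mul_self_sub_mul_self {S T : Matrix n n 𝕜}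
    (hS : S.PosSemidef) (hT : T.PosSemidef) {μ : ℝ} {w : n → 𝕜} (hw : star w ⬝ᵥ w = 1)
    (hμ : (S - T) *ᵥ w = μ • w) : μ ^ 2 ≤ ‖star w ⬝ᵥ ((S * S - T * T) *ᵥ w)‖ := by
  set a := RCLike.re (star w ⬝ᵥ (S *ᵥ w))
  set b := RCLike.re (star w ⬝ᵥ (T *ᵥ w))
  have ha : 0 ≤ a := hS.re_dotProduct_nonneg w
  have hb : 0 ≤ b := hT.re_dotProduct_nonneg w
  have hμ_eq : μ = a - b := by
    have := congrArg (fun v => RCLike.re (star w ⬝ᵥ v)) hμ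
    simpa [sub_mulVec, dotProduct_sub, hw, RCLike.real_smul_eq_coe_mul] using this.symm
  have hμ_left : star w ᵥ* (S - T) = μ • star w := by
    rw [← (hS.1.sub hT.1).eq, ← star_mulVec, hμ, star_smul, star_trivial]
  have hquad : star w ⬝ᵥ ((S * S - T * T) *ᵥ w)
      = μ * (star w ⬝ᵥ (S *ᵥ w) + star w ⬝ᵥ (T *ᵥ w)) := by
    rw [show S * S - T * T = S * (S - T) + (S - T) * T by noncomm_ring, add_mulVec, dotProduct_add,
      ← mulVec_mulVec, hμ, ← mulVec_mulVec, dotProduct_mulVec (star w) (S - T), hμ_left]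
    simp [mulVec_smul, dotProduct_smul, smul_dotProduct, mul_add, RCLike.real_smul_eq_coe_mul]
  calc μ ^ 2 = |μ| * |μ| := by rw [abs_mul_abs_self, sq]
    _ ≤ |μ| * (a + b) := by gcongr; rw [hμ_eq, abs_le]; constructor <;> linarith
    _ = |RCLike.re (star w ⬝ᵥ ((S * S - T * T) *ᵥ w))| := by
        rw [hquad, RCLike.re_ofReal_mul, map_add, abs_mul, abs_of_nonneg (add_nonneg ha hb)]
    _ ≤ _ := RCLike.abs_re_le_norm _

theorem PosSemidef.sum_norm_sq_sub_le {S T : Matrix n n 𝕜} (hS : S.PosSemidef) (hT : T.PosSemidef) :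
    ∑ i, ∑ j, ‖(S - T) i j‖ ^ 2 ≤ Fintype.card n * √(∑ i, ∑ j, ‖(S * S - T * T) i j‖ ^ 2) := by
  set hD := hS.1.sub hT.1
  rw [hD.sum_norm_sq_eq_sum_eigenvalues_sq]
  refine (Finset.sum_le_sum (g := fun _ => √(∑ i, ∑ j, ‖(S * S - T * T) i j‖ ^ 2))
    fun i _ => ?_).trans_eq (by simp)
  have hb : ‖hD.eigenvectorBasis i‖ = 1 := hD.eigenvectorBasis.orthonormal.1 i
  have hw : star ⇑(hD.eigenvectorBasis i) ⬝ᵥ ⇑(hD.eigenvectorBasis i) = 1 := by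
    rw [dotProduct_comm, ← EuclideanSpace.inner_eq_star_dotProduct, inner_self_eq_norm_sq_to_K, hb]
    simp
  refine (hS.sq_le_norm_star_dotProduct_mul_self_sub_mul_self hT hw
    (hD.mulVec_eigenvectorBasis i)).trans ((norm_star_dotProduct_mulVec_le _ _).trans ?_)
  rw [← EuclideanSpace.norm_sq_eq, hb, one_pow, mul_one]

end Matrix

open Matrix in
theorem gram_decompositions_close_general {n : ℕ} (X X' V W : Matrix (Fin n) (Fin n) ℂ) (ε : ℝ)
    (hV : X = V * Vᴴ) (hW : X' = W * Wᴴ)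
    (hXX' : frobNormC (X - X') ≤ ε) :
    ∃ U : Matrix (Fin n) (Fin n) ℂ, U * Uᴴ = 1 ∧
      frobNormC (V * U - W) ≤ Real.sqrt (n * ε) ∧
      ∀ i : Fin n, Real.sqrt (∑ j, ‖(V * U) i j - W i j‖ ^ 2) ≤ Real.sqrt (n * ε) := by
  obtain ⟨U₁, hU₁, hVU₁⟩ := exists_mem_unitaryGroup_sqrt_mul_eq V
  obtain ⟨U₂, hU₂, hWU₂⟩ := exists_mem_unitaryGroup_sqrt_mul_eq W
  rw [← hV] at hVU₁
  rw [← hW] at hWU₂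
  have hdiff : V * (star U₁ * U₂) - W = (CFC.sqrt X - CFC.sqrt X') * U₂ := by
    rw [← hVU₁, ← hWU₂, mul_assoc, ← mul_assoc U₁, mem_unitaryGroup_iff.mp hU₁, one_mul, sub_mul]
  have hX : 0 ≤ X := hV ▸ (posSemidef_self_mul_conjTranspose V).nonneg
  have hX' : 0 ≤ X' := hW ▸ (posSemidef_self_mul_conjTranspose W).nonneg
  have hsum : ∑ i, ∑ j, ‖(V * (star U₁ * U₂) - W) i j‖ ^ 2 ≤ n * ε := by
    rw [hdiff, sum_norm_sq_mul_unitary _ hU₂]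
    calc _ ≤ n * √(∑ i, ∑ j, ‖(X - X') i j‖ ^ 2) := by
          simpa [CFC.sqrt_mul_sqrt_self X hX, CFC.sqrt_mul_sqrt_self X' hX'] using
            (nonneg_iff_posSemidef.mp (CFC.sqrt_nonneg X)).sum_norm_sq_sub_le
              (nonneg_iff_posSemidef.mp (CFC.sqrt_nonneg X'))
      _ ≤ n * ε := by gcongr; exact hXX'
  refine ⟨star U₁ * U₂, mem_unitaryGroup_iff.mp (mul_mem (Unitary.star_mem hU₁) hU₂),
    Real.sqrt_le_sqrt hsum, fun i => Real.sqrt_le_sqrt ?_⟩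
  refine le_trans ?_ hsum
  exact Finset.single_le_sum (f := fun i => ∑ j, ‖(V * (star U₁ * U₂) - W) i j‖ ^ 2)
    (fun i _ => by positivity) (Finset.mem_univ i)

/-- If `X = V V†` and `X' = W W†` are positive semidefinite with
`‖X - X'‖_F ≤ ε`, then there is a unitary `U` with `‖V U - W‖_F ≤ √(n·ε)`; in
particular the rows (Gram decomposition vectors) of `V U` and `W` are pairwise
within `√(n·ε)` in 2-norm. -/
theorem gram_decompositions_close {n : ℕ} (X X' V W : Matrix (Fin n) (Fin n) ℂ) (ε : ℝ)
    (hX : X.PosSemidef) (hX' : X'.PosSemidef)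
    (hV : X = V * Vᴴ) (hW : X' = W * Wᴴ)
    (hXX' : frobNormC (X - X') ≤ ε) :
    ∃ U : Matrix (Fin n) (Fin n) ℂ, U * Uᴴ = 1 ∧
      frobNormC (V * U - W) ≤ Real.sqrt (n * ε) ∧
      ∀ i : Fin n, Real.sqrt (∑ j, ‖(V * U) i j - W i j‖ ^ 2) ≤ Real.sqrt (n * ε) :=
  gram_decompositions_close_general X X' V W ε hV hW hXX'
end

section
/- For any m > n, the (1+n)×(1+n) matrix F with F₀₀ = 1, F_{0i} = F_{i0} = 1/m and F_{ii} = 1/m for 1 ≤ i ≤ n, and all other entries zero, is positive definite. Hence the Lovász theta SDP (with constraints X₀₀ = 1, X_{ii} = X_{0i}, X_{ij} = 0 for i ∼ j in a graph with no loops) is strictly feasible whenever the graph has no edges incident to vertex 0 and no constraint forces off-diagonal entries among {1,…,n} other than zeros; in particular F satisfies X_{ij} = 0 for all i ≠ j in {1,…,n}. -/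
/-- The arrow-shaped strictly feasible matrix for the Lovász theta SDP. -/
noncomputable def arrowMatrix (n : ℕ) (m : ℝ) : Matrix (Fin (n + 1)) (Fin (n + 1)) ℝ :=
  fun i j =>
    if i = 0 ∧ j = 0 then 1
    else if i = 0 ∨ j = 0 then 1 / m
    else if i = j then 1 / m
    else 0

/-!
Writing `eᵢ` for the standard basis, `F = (1 - n/m) e₀e₀ᵀ + (1/m) ∑ᵢ (e₀ + eᵢ)(e₀ + eᵢ)ᵀ`, so
`xᵀ F x = (1 - n/m) x₀² + (1/m) ∑ᵢ (x₀ + xᵢ)²`. For `m > n` both coefficients are positive, and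
the form vanishes only if `x₀ = 0` and then every `xᵢ = -x₀ = 0`.
-/

open Matrix

namespace arrowMatrix

variable (n : ℕ) (m : ℝ)

@[simp]
lemma apply_zero_zero : arrowMatrix n m 0 0 = 1 := by simp [arrowMatrix]

@[simp]
lemma apply_zero_succ (j : Fin n) : arrowMatrix n m 0 j.succ = 1 / m := by
  simp [arrowMatrix]

@[simp]
lemma apply_succ_zero (i : Fin n) : arrowMatrix n m i.succ 0 = 1 / m := by
  simp [arrowMatrix]

@[simp]
lemma apply_succ_succ (i j : Fin n) :
    arrowMatrix n m i.succ j.succ = if i = j then 1 / m else 0 := by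
  simp [arrowMatrix, Fin.succ_inj]

lemma apply_self_of_ne_zero {i : Fin (n + 1)} (hi : i ≠ 0) :
    arrowMatrix n m i i = arrowMatrix n m 0 i := by
  simp [arrowMatrix, hi]

lemma apply_eq_zero_of_ne {i j : Fin (n + 1)} (hi : i ≠ 0) (hj : j ≠ 0) (hij : i ≠ j) :
    arrowMatrix n m i j = 0 := by
  simp [arrowMatrix, hi, hj, hij]

lemma isHermitian : (arrowMatrix n m).IsHermitian := by
  ext i j
  cases i using Fin.cases <;> cases j using Fin.cases <;> simp [eq_comm]

lemma dotProduct_mulVec (x : Fin (n + 1) → ℝ) :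
    x ⬝ᵥ (arrowMatrix n m *ᵥ x) =
      (1 - n / m) * x 0 ^ 2 + (1 / m) * ∑ i : Fin n, (x 0 + x i.succ) ^ 2 := by
  simp only [dotProduct, mulVec, Fin.sum_univ_succ, apply_zero_zero, apply_zero_succ,
    apply_succ_zero, apply_succ_succ, ite_mul, zero_mul, Finset.sum_ite_eq, Finset.mem_univ, if_true]
  simp only [mul_add, add_sq, Finset.sum_add_distrib, Finset.mul_sum, Finset.sum_const,
    Finset.card_univ, Fintype.card_fin, nsmul_eq_mul]
  ring_nf
  rw [Finset.sum_mul]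
  ring

theorem posDef (hm : (n : ℝ) < m) : (arrowMatrix n m).PosDef := by
  have hm0 : 0 < m := (Nat.cast_nonneg n).trans_lt hm
  have hcoeff : 0 < 1 - n / m := sub_pos.mpr ((div_lt_one hm0).mpr hm)
  refine .of_dotProduct_mulVec_pos (isHermitian n m) fun x hx ↦ ?_
  rw [star_trivial, dotProduct_mulVec]
  by_cases hx0 : x 0 = 0
  · obtain ⟨i, hi⟩ : ∃ i : Fin n, x i.succ ≠ 0 := by
      by_contra! h
      exact hx (funext fun k ↦ Fin.cases hx0 h k)
    have hsum : 0 < ∑ i : Fin n, (x 0 + x i.succ) ^ 2 :=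
      Finset.sum_pos' (fun _ _ ↦ sq_nonneg _)
        ⟨i, Finset.mem_univ _, by rw [hx0, zero_add]; positivity⟩
    exact add_pos_of_nonneg_of_pos (by positivity) (mul_pos (by positivity) hsum)
  · exact add_pos_of_pos_of_nonneg (mul_pos hcoeff (by positivity)) (by positivity)

end arrowMatrix

/-- For any real `m > n`, the arrow matrix `F` (with `F₀₀ = 1`,
`F_{0i} = F_{i0} = F_{ii} = 1/m`, zero elsewhere) is positive definite, and it satisfies
the Lovász theta SDP constraints: `F₀₀ = 1`, `F_{ii} = F_{0i}` for `i ≥ 1`, and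
`F_{ij} = 0` for all distinct `i ≠ j` in `{1,…,n}` (hence for any edge set). -/
theorem arrowMatrix_strictly_feasible (n : ℕ) (m : ℝ) (hm : (n : ℝ) < m) :
    (arrowMatrix n m).PosDef ∧
      arrowMatrix n m 0 0 = 1 ∧
      (∀ i : Fin (n + 1), i ≠ 0 → arrowMatrix n m i i = arrowMatrix n m 0 i) ∧
      (∀ i j : Fin (n + 1), i ≠ 0 → j ≠ 0 → i ≠ j → arrowMatrix n m i j = 0) := by
  open arrowMatrix in
  exact ⟨posDef n m hm, apply_zero_zero n m, fun _ ↦ apply_self_of_ne_zero n m,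
    fun _ _ ↦ apply_eq_zero_of_ne n m⟩
end

section
/- For any odd integer n ≥ 3, let θ = n·cos(π/n)/(1 + cos(π/n)) and let A be the adjacency matrix of C_n. Then the n×n matrix I + ((n − θ)/(2θ))·A − (1/θ)·e eᵀ is positive semidefinite, where e is the all-ones vector. -/
open Real Matrix

/-- Adjacency matrix of the cycle graph `C_n` (indices mod `n`). -/
def cycleAdj (n : ℕ) : Matrix (Fin n) (Fin n) ℝ :=
  fun i j => if j.val = (i.val + 1) % n ∨ i.val = (j.val + 1) % n then 1 else 0

/-!
With `c = cos (π / n)` one has `(n - θ) / (2θ) = 1 / (2c)` and `1 / θ = (1 + c) / (n c)`, so the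
quadratic form of the matrix at `x` is `(n (c ∑ xᵢ² + ∑ xᵢ xᵢ₊₁) - (1 + c) (∑ xᵢ)²) / (n c)`.
By Parseval's identity and its shifted version for the discrete Fourier transform `x̂` on `ZMod n`,
`n (c ∑ xᵢ² + ∑ xᵢ xᵢ₊₁) = ∑ₖ (c + cos (2πk/n)) |x̂ₖ|²`, whose `k = 0` term is `(1 + c) (∑ xᵢ)²`.
The other terms are nonnegative: for odd `n`, `2πk/n` stays at distance at least `π/n` from `π`,
so `cos (2πk/n) ≥ -c`.
-/

open ComplexConjugate

lemma Real.cos_pi_div_pos {n : ℕ} (hn : 2 < n) : 0 < cos (π / n) := by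
  have hn₀ : (0 : ℝ) < n := by positivity
  refine cos_pos_of_mem_Ioo ⟨by linarith [pi_pos, div_pos pi_pos hn₀], ?_⟩
  rw [div_lt_div_iff₀ hn₀ two_pos]
  exact mul_lt_mul_of_pos_left (by exact_mod_cast hn) pi_pos

lemma Real.cos_le_cos_pi_div_of_odd {n : ℕ} {m : ℤ} (hm : Odd m) (hmn : |m| ≤ n) :
    cos (π * m / n) ≤ cos (π / n) := by
  have hm₁ : (1 : ℝ) ≤ |(m : ℝ)| := by
    exact_mod_cast Int.one_le_abs (by rintro rfl; simp at hm)
  have hmn' : |(m : ℝ)| ≤ n := by exact_mod_cast hmn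
  have hn : (0 : ℝ) < n := by linarith
  rw [← cos_abs, abs_div, abs_mul, abs_of_pos pi_pos, Nat.abs_cast]
  refine cos_le_cos_of_nonneg_of_le_pi (by positivity) ?_ ?_
  · rw [div_le_iff₀ hn]
    exact mul_le_mul_of_nonneg_left hmn' pi_pos.le
  · gcongr
    exact le_mul_of_one_le_right pi_pos.le hm₁

lemma Real.neg_cos_pi_div_le_cos_two_pi_mul_div {n k : ℕ} (hn : Odd n) (hk : k ≤ n) :
    -cos (π / n) ≤ cos (2 * π * k / n) := by
  have hn₀ : (n : ℝ) ≠ 0 := by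
    exact_mod_cast (Nat.pos_of_ne_zero (by rintro rfl; simp at hn)).ne'
  have hodd : Odd (2 * (k : ℤ) - n) := by
    obtain ⟨t, rfl⟩ := hn
    exact ⟨k - t - 1, by push_cast; ring⟩
  have hcos : cos (2 * π * k / n) = -cos (π * ((2 * (k : ℤ) - n : ℤ) : ℝ) / n) := by
    rw [show π * ((2 * (k : ℤ) - n : ℤ) : ℝ) / n = 2 * π * k / n - π by push_cast; field_simp,
      cos_sub_pi, neg_neg]
  rw [hcos, neg_le_neg_iff]
  exact cos_le_cos_pi_div_of_odd hodd (abs_le.mpr ⟨by omega, by omega⟩)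

namespace ZMod

variable {N : ℕ} [NeZero N]

lemma sum_stdAddChar_mul_dft_mul_conj (Φ : ZMod N → ℂ) (a : ZMod N) :
    ∑ k, stdAddChar (k * a) * (𝓕 Φ k * conj (𝓕 Φ k)) = N * ∑ l, Φ (l + a) * conj (Φ l) := by
  have orth (m : ZMod N) : ∑ k : ZMod N, stdAddChar (k * m) = if m = 0 then (N : ℂ) else 0 := by
    simpa using AddChar.sum_mulShift m (isPrimitive_stdAddChar N)
  have expand (k : ZMod N) : stdAddChar (k * a) * (𝓕 Φ k * conj (𝓕 Φ k)) =
      ∑ l, ∑ j, Φ j * conj (Φ l) * stdAddChar (k * (l + a - j)) := by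
    rw [dft_apply, map_sum, Finset.sum_mul_sum, Finset.sum_comm, Finset.mul_sum]
    refine Finset.sum_congr rfl fun l _ ↦ ?_
    rw [Finset.mul_sum]
    refine Finset.sum_congr rfl fun j _ ↦ ?_
    rw [smul_eq_mul, smul_eq_mul, map_mul (starRingEnd ℂ), ← AddChar.map_neg_eq_conj, neg_neg,
      show k * (l + a - j) = k * a + (-(j * k) + l * k) by ring,
      AddChar.map_add_eq_mul, AddChar.map_add_eq_mul]
    ring
  simp_rw [expand]
  rw [Finset.sum_comm, Finset.mul_sum]
  refine Finset.sum_congr rfl fun l _ ↦ ?_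
  rw [Finset.sum_comm]
  simp_rw [← Finset.mul_sum, orth, sub_eq_zero, mul_ite, mul_zero]
  rw [Finset.sum_ite_eq]
  simp [mul_comm]

lemma sum_re_stdAddChar_mul_normSq_dft (x : ZMod N → ℝ) (a : ZMod N) :
    ∑ k, (stdAddChar (k * a)).re * Complex.normSq (𝓕 (fun j ↦ (x j : ℂ)) k) =
      N * ∑ l, x (l + a) * x l := by
  have h := congrArg Complex.re (sum_stdAddChar_mul_dft_mul_conj (fun j ↦ (x j : ℂ)) a)
  simp only [Complex.mul_conj, Complex.re_sum, Complex.re_mul_ofReal, Complex.conj_ofReal] at h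
  rw [h]
  norm_cast

lemma re_stdAddChar (k : ZMod N) : (stdAddChar k).re = cos (2 * π * k.val / N) := by
  rw [stdAddChar_apply, toCircle_apply, ← Complex.exp_ofReal_mul_I_re]
  push_cast
  ring_nf

lemma add_one_mul_sq_sum_le_of_re_stdAddChar (x : ZMod N → ℝ) {c : ℝ}
    (hc : ∀ k : ZMod N, k ≠ 0 → 0 ≤ c + (stdAddChar k).re) :
    (c + 1) * (∑ l, x l) ^ 2 ≤ N * (c * ∑ l, x l ^ 2 + ∑ l, x (l + 1) * x l) := by
  let w (k : ZMod N) := (c + (stdAddChar k).re) * Complex.normSq (𝓕 (fun j ↦ (x j : ℂ)) k)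
  have hw₀ : w 0 = (c + 1) * (∑ l, x l) ^ 2 := by
    simp only [w, AddChar.map_zero_eq_one, Complex.one_re, dft_apply_zero,
      ← Complex.ofReal_sum, Complex.normSq_ofReal, sq]
  have hsum : N * (c * ∑ l, x l ^ 2 + ∑ l, x (l + 1) * x l) = ∑ k, w k := by
    have h₀ := sum_re_stdAddChar_mul_normSq_dft x 0
    have h₁ := sum_re_stdAddChar_mul_normSq_dft x 1
    simp only [mul_zero, AddChar.map_zero_eq_one, Complex.one_re, one_mul, add_zero,
      mul_one] at h₀ h₁
    simp only [w, add_mul, Finset.sum_add_distrib, ← Finset.mul_sum, sq, h₀, h₁]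
    ring
  rw [hsum, ← Finset.add_sum_erase _ w (Finset.mem_univ 0), hw₀]
  refine le_add_of_nonneg_right (Finset.sum_nonneg fun k hk ↦ ?_)
  exact mul_nonneg (hc k (Finset.ne_of_mem_erase hk)) (Complex.normSq_nonneg _)

end ZMod

lemma Fin.add_one_mul_sq_sum_le_of_cos {n : ℕ} [NeZero n] (x : Fin n → ℝ) {c : ℝ}
    (hc : ∀ k : ℕ, 0 < k → k < n → 0 ≤ c + cos (2 * π * k / n)) :
    (c + 1) * (∑ l, x l) ^ 2 ≤ n * (c * ∑ l, x l ^ 2 + ∑ l, x l * x (l + 1)) := by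
  obtain ⟨m, rfl⟩ : ∃ m, n = m + 1 := Nat.exists_eq_succ_of_ne_zero (NeZero.ne n)
  simp_rw [mul_comm (x _) (x (_ + 1))]
  -- `ZMod (m + 1)` is `Fin (m + 1)` by definition, ring structure included.
  refine ZMod.add_one_mul_sq_sum_le_of_re_stdAddChar (N := m + 1) x fun k hk ↦ ?_
  rw [ZMod.re_stdAddChar]
  exact hc _ (Nat.pos_of_ne_zero ((ZMod.val_ne_zero k).mpr hk)) (ZMod.val_lt k)

section cycle

variable {n : ℕ}

lemma cycleAdj_isHermitian : (cycleAdj n).IsHermitian := by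
  ext i j
  simp [cycleAdj, or_comm]

lemma cycleAdj_apply [NeZero n] (hn : 3 ≤ n) (i j : Fin n) :
    cycleAdj n i j = (if j = i + 1 then 1 else 0) + (if i = j + 1 then 1 else 0) := by
  have hsucc (a b : Fin n) : b.val = (a.val + 1) % n ↔ b = a + 1 := by
    rw [Fin.ext_iff, Fin.val_add, Fin.val_one', Nat.add_mod_mod]
  have htwo (a : Fin n) : a ≠ a + 1 + 1 := by
    rw [Ne, add_assoc, left_eq_add, Fin.ext_iff, Fin.val_add, Fin.val_one',
      Nat.mod_eq_of_lt (by omega : 1 < n)]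
    simp [Nat.mod_eq_of_lt (by omega : 2 < n)]
  simp only [cycleAdj, hsucc]
  by_cases hji : j = i + 1
  · simp [hji, htwo]
  · by_cases hij : i = j + 1 <;> simp [hji, hij, htwo]

lemma dotProduct_cycleAdj_mulVec [NeZero n] (hn : 3 ≤ n) (x : Fin n → ℝ) :
    x ⬝ᵥ (cycleAdj n *ᵥ x) = 2 * ∑ i, x i * x (i + 1) := by
  have hsplit : x ⬝ᵥ (cycleAdj n *ᵥ x) = ∑ i, ∑ j, (if j = i + 1 then x i * x j else 0) +
      ∑ i, ∑ j, (if i = j + 1 then x i * x j else 0) := by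
    simp only [dotProduct, mulVec, Finset.mul_sum, cycleAdj_apply hn, ← Finset.sum_add_distrib]
    refine Finset.sum_congr rfl fun i _ ↦ Finset.sum_congr rfl fun j _ ↦ ?_
    split_ifs <;> ring
  have hpred : ∑ i, ∑ j, (if i = j + 1 then x i * x j else 0) = ∑ j, x (j + 1) * x j := by
    rw [Finset.sum_comm]
    simp only [Finset.sum_ite_eq', Finset.mem_univ, if_true]
  rw [hsplit, hpred]
  simp only [Finset.sum_ite_eq', Finset.mem_univ, if_true, mul_comm (x (_ + 1))]
  ring

def cycleSchurMatrix (n : ℕ) (a b : ℝ) : Matrix (Fin n) (Fin n) ℝ :=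
  1 + a • cycleAdj n - b • vecMulVec (fun _ ↦ 1) (fun _ ↦ 1)

lemma cycleSchurMatrix_isHermitian (a b : ℝ) : (cycleSchurMatrix n a b).IsHermitian :=
  (isHermitian_one.add (cycleAdj_isHermitian.smul (IsSelfAdjoint.all _))).sub
    ((posSemidef_vecMulVec_self_star (fun _ : Fin n ↦ (1 : ℝ))).isHermitian.smul
      (IsSelfAdjoint.all _))

lemma dotProduct_cycleSchurMatrix_mulVec [NeZero n] (hn : 3 ≤ n) (a b : ℝ) (x : Fin n → ℝ) :
    x ⬝ᵥ (cycleSchurMatrix n a b *ᵥ x) =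
      ∑ i, x i ^ 2 + 2 * a * ∑ i, x i * x (i + 1) - b * (∑ i, x i) ^ 2 := by
  have hsq : x ⬝ᵥ x = ∑ i, x i ^ 2 := by simp [dotProduct, sq]
  have hJ : x ⬝ᵥ (vecMulVec (fun _ ↦ 1) (fun _ ↦ 1) *ᵥ x) = (∑ i, x i) ^ 2 := by
    simp [vecMulVec_mulVec, dotProduct, sq, Finset.sum_mul]
  rw [cycleSchurMatrix, sub_mulVec, add_mulVec, dotProduct_sub, dotProduct_add, smul_mulVec,
    smul_mulVec, dotProduct_smul, dotProduct_smul, one_mulVec, hsq, dotProduct_cycleAdj_mulVec hn,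
    hJ, smul_eq_mul, smul_eq_mul]
  ring

lemma cycleSchurMatrix_posSemidef (hn : 3 ≤ n) (hodd : Odd n) :
    (cycleSchurMatrix n (1 / (2 * cos (π / n)))
      ((1 + cos (π / n)) / (n * cos (π / n)))).PosSemidef := by
  have : NeZero n := ⟨by omega⟩
  set c := cos (π / n)
  have hc : 0 < c := cos_pi_div_pos hn
  refine PosSemidef.of_dotProduct_mulVec_nonneg (cycleSchurMatrix_isHermitian _ _) fun x ↦ ?_
  have key := Fin.add_one_mul_sq_sum_le_of_cos x (c := c)
    fun k _ hk ↦ by linarith [neg_cos_pi_div_le_cos_two_pi_mul_div hodd hk.le]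
  have hform : ∑ i, x i ^ 2 + 2 * (1 / (2 * c)) * ∑ i, x i * x (i + 1) -
      (1 + c) / (n * c) * (∑ i, x i) ^ 2 =
      (n * (c * ∑ i, x i ^ 2 + ∑ i, x i * x (i + 1)) - (c + 1) * (∑ i, x i) ^ 2) / (n * c) := by
    field_simp
    ring
  rw [star_trivial, dotProduct_cycleSchurMatrix_mulVec hn, hform]
  exact div_nonneg (sub_nonneg.mpr key) (by positivity)

end cycle

/-- For odd `n ≥ 3` and `θ = n cos(π/n)/(1+cos(π/n))`, the matrix
`I + ((n−θ)/(2θ))·A_{C_n} − (1/θ)·e eᵀ` is positive semidefinite. -/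
theorem kcbs_schur_complement_psd (n : ℕ) (hn : 3 ≤ n) (hodd : Odd n) :
    letI θ : ℝ := n * Real.cos (π / n) / (1 + Real.cos (π / n))
    Matrix.PosSemidef
      ((1 : Matrix (Fin n) (Fin n) ℝ) + ((n - θ) / (2 * θ)) • cycleAdj n
        - (1 / θ) • Matrix.vecMulVec (fun _ => 1) (fun _ => 1)) := by
  set c := cos (π / n)
  have hc : 0 < c := cos_pi_div_pos hn
  have hn₀ : (n : ℝ) ≠ 0 := by positivity
  have hcoef₁ : (n - n * c / (1 + c)) / (2 * (n * c / (1 + c))) = 1 / (2 * c) := by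
    field_simp
    ring
  have hcoef₂ : 1 / (n * c / (1 + c)) = (1 + c) / (n * c) := by
    field_simp
  rw [hcoef₁, hcoef₂]
  exact cycleSchurMatrix_posSemidef hn hodd
end

section
/- Let n be an odd integer ≥ 5. Suppose M is a symmetric (1+n)×(1+n) real matrix (indexed by {0,1,…,n}) satisfying M₀₀ = 0, M_{0i} = M_{ii} for 1 ≤ i ≤ n, M_{i,i+1 mod n} = 0 for 1 ≤ i ≤ n, and M Z_n = 0, where Z_n is the dual optimal matrix for the n-cycle (top-left entry θ = n cos(π/n)/(1+cos(π/n)), off-border entries −1, bottom block I + ((n−θ)/(2θ))A_{C_n}). Then M = 0. -/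
/-!
For a cycle vertex `a` let `μ_a = M_{a,a} = M_{0,a}`. Each column equation of `M Z_n = 0` is a
three-term relation along the cycle, so every row of `M`, read along the cycle, obeys a
second-order linear recurrence. Row `a` starts with `μ_a, 0`, hence it is symmetric about `a`
(its reflection obeys the same recurrence with the same start) and `M_{a,a+2} = (1/c - 1) μ_a`,
where `c = 1 / (2 cos (π / n)) ∈ (0, 1)` is the edge weight of `Z_n`. Symmetry of `M` then gives
`μ_{a+2} = μ_a`, so `μ` is constant as `n` is odd, and the column equations in row `0` give
`(1 + 2c) μ = 0`. Finally a row starting with `0, 0` vanishes.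
-/

open Real

/-- The dual optimal matrix `Z_n` for the KCBS SDP on the odd `n`-cycle. -/
noncomputable def kcbsDual (n : ℕ) : Matrix (Fin (n + 1)) (Fin (n + 1)) ℝ :=
  fun i j =>
    let θ : ℝ := n * Real.cos (π / n) / (1 + Real.cos (π / n))
    if i.val = 0 ∧ j.val = 0 then θ
    else if i.val = 0 ∨ j.val = 0 then -1
    else if i = j then 1
    else if j.val = i.val % n + 1 ∨ i.val = j.val % n + 1 then (n - θ) / (2 * θ)
    else 0

theorem one_half_lt_cos_pi_div {n : ℕ} (hn : 4 ≤ n) : 1 / 2 < cos (π / n) := by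
  have hlt : π / n < π / 3 := div_lt_div_of_pos_left pi_pos (by norm_num) (by exact_mod_cast hn)
  have := cos_lt_cos_of_nonneg_of_le_pi (by positivity) (by linarith [pi_gt_three]) hlt
  rwa [cos_pi_div_three] at this

noncomputable def kcbsTheta (n : ℕ) : ℝ := n * cos (π / n) / (1 + cos (π / n))

noncomputable def kcbsWeight (n : ℕ) : ℝ := (n - kcbsTheta n) / (2 * kcbsTheta n)

theorem kcbsWeight_eq {n : ℕ} (hn : n ≠ 0) (hcos : 0 < cos (π / n)) :
    kcbsWeight n = (2 * cos (π / n))⁻¹ := by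
  have : (n : ℝ) ≠ 0 := by exact_mod_cast hn
  unfold kcbsWeight kcbsTheta
  field_simp
  ring

theorem kcbsWeight_mem_Ioo {n : ℕ} (hn : 4 ≤ n) : kcbsWeight n ∈ Set.Ioo 0 1 := by
  have hcos := one_half_lt_cos_pi_div hn
  rw [kcbsWeight_eq (by omega) (by linarith)]
  constructor
  · positivity
  · exact inv_lt_one_of_one_lt₀ (by linarith)

section
open Fin.CommRing

theorem Fin.eq_of_two_step_recurrence {α : Type*} {n : ℕ} [NeZero n] {x y : Fin n → α}
    (f : α → α → α) (hx : ∀ d, x (d + 2) = f (x d) (x (d + 1)))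
    (hy : ∀ d, y (d + 2) = f (y d) (y (d + 1))) (h0 : x 0 = y 0) (h1 : x 1 = y 1) : x = y := by
  have hnat : ∀ k : ℕ, x (k : Fin n) = y k ∧ x ((k : Fin n) + 1) = y ((k : Fin n) + 1) := by
    intro k
    induction k with
    | zero => simpa using And.intro h0 h1
    | succ k ih =>
      refine ⟨by simpa using ih.2, ?_⟩
      rw [Nat.cast_succ, add_assoc, one_add_one_eq_two, hx, hy, ih.1, ih.2]
  funext d
  simpa using (hnat d.val).1

theorem Fin.periodic_one_of_periodic_two {α : Type*} {n : ℕ} [NeZero n] {f : Fin n → α}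
    (hf : Function.Periodic f 2) (hn : Odd n) : Function.Periodic f 1 := by
  obtain ⟨m, rfl⟩ := hn
  have h : (m + 1) • (2 : Fin (2 * m + 1)) = 1 := by
    have := Fin.natCast_self (2 * m + 1)
    rw [nsmul_eq_mul]; push_cast at this ⊢
    linear_combination this
  simpa [h] using hf.nsmul (m + 1)

theorem Fin.val_succ_add_one {n : ℕ} [NeZero n] (a : Fin n) :
    (a + 1).succ.val = a.succ.val % n + 1 := by
  simp [Fin.val_add]

theorem Fin.add_one_ne_sub_one {n : ℕ} [NeZero n] (hn : 3 ≤ n) (b : Fin n) :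
    b + 1 ≠ b - 1 := by
  intro h
  have h2 : ((2 : ℕ) : Fin n) = 0 := by push_cast; linear_combination h
  have := Nat.le_of_dvd two_pos (Fin.natCast_eq_zero.mp h2)
  omega

/-- The vertex `0` is joined to the `n`-cycle `1, …, n`, whose vertex `b.succ` is labelled by
`b : Fin n`, so that cycle neighbours differ by `±1` in `Fin n`. This is `M Z = 0` on the columns
`b.succ`, for `Z` with entries `-1` in row `0`, `1` on the diagonal and `c` on cycle edges. -/
def AnnihilatesCycleColumns {n : ℕ} [NeZero n] (c : ℝ)
    (M : Matrix (Fin (n + 1)) (Fin (n + 1)) ℝ) : Prop :=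
  ∀ i (b : Fin n), M i b.succ + c * (M i (b - 1).succ + M i (b + 1).succ) = M i 0

namespace AnnihilatesCycleColumns

variable {n : ℕ} [NeZero n] {c : ℝ} {M : Matrix (Fin (n + 1)) (Fin (n + 1)) ℝ}

theorem apply_add_add_two (hM : AnnihilatesCycleColumns c M) (hc : c ≠ 0) (i : Fin (n + 1))
    (a d : Fin n) :
    M i (a + (d + 2)).succ = (M i 0 - M i (a + (d + 1)).succ) / c - M i (a + d).succ := by
  have h := hM i (a + (d + 1))
  rw [show a + (d + 1) + 1 = a + (d + 2) by ring, show a + (d + 1) - 1 = a + d by ring] at h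
  rw [eq_sub_iff_add_eq, eq_div_iff hc, ← h]
  ring

theorem apply_sub_add_two (hM : AnnihilatesCycleColumns c M) (hc : c ≠ 0) (i : Fin (n + 1))
    (a d : Fin n) :
    M i (a - (d + 2)).succ = (M i 0 - M i (a - (d + 1)).succ) / c - M i (a - d).succ := by
  have h := hM i (a - (d + 1))
  rw [show a - (d + 1) - 1 = a - (d + 2) by ring, show a - (d + 1) + 1 = a - d by ring] at h
  rw [eq_sub_iff_add_eq, eq_div_iff hc, ← h]
  ring

theorem apply_sub_eq_apply_add (hM : AnnihilatesCycleColumns c M) (hc : c ≠ 0) (i : Fin (n + 1))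
    (a : Fin n) (h : M i (a - 1).succ = M i (a + 1).succ) (d : Fin n) :
    M i (a - d).succ = M i (a + d).succ :=
  congrFun (Fin.eq_of_two_step_recurrence (x := fun d ↦ M i (a - d).succ)
    (y := fun d ↦ M i (a + d).succ) (fun u v ↦ (M i 0 - v) / c - u)
    (hM.apply_sub_add_two hc i a) (hM.apply_add_add_two hc i a) (by simp) h) d

theorem apply_eq_zero_of_consecutive (hM : AnnihilatesCycleColumns c M) (hc : c ≠ 0)
    {i : Fin (n + 1)} (h0 : M i 0 = 0) {a : Fin n} (ha : M i a.succ = 0)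
    (ha' : M i (a + 1).succ = 0) (b : Fin n) : M i b.succ = 0 := by
  have h := Fin.eq_of_two_step_recurrence (x := fun d ↦ M i (a + d).succ) (y := 0)
    (fun u v ↦ (M i 0 - v) / c - u) (hM.apply_add_add_two hc i a) (by simp [h0])
    (by simpa using ha) (by simpa using ha')
  simpa using congrFun h (b - a)

theorem diag_add_two (hM : AnnihilatesCycleColumns c M) (hc : c ≠ 0) (hc1 : c ≠ 1)
    (hsymm : M.IsSymm) (hdiag : ∀ a : Fin n, M 0 a.succ = M a.succ a.succ)
    (hadj : ∀ a : Fin n, M a.succ (a + 1).succ = 0) (a : Fin n) :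
    M (a + 2).succ (a + 2).succ = M a.succ a.succ := by
  have hrow (a : Fin n) : M a.succ (a + 2).succ = (c⁻¹ - 1) * M a.succ a.succ := by
    have h := hM.apply_add_add_two hc a.succ a 0
    simp only [zero_add, add_zero] at h
    rw [h, hsymm.apply, hdiag, hadj]
    ring
  have hrefl (a : Fin n) : M a.succ (a - 2).succ = M a.succ (a + 2).succ :=
    hM.apply_sub_eq_apply_add hc a.succ a
      (by rw [hadj, hsymm.apply, ← hadj (a - 1), sub_add_cancel]) 2
  refine mul_left_cancel₀ (sub_ne_zero.mpr (inv_ne_one.mpr hc1)) ?_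
  rw [← hrow, ← hrow, ← hrefl, add_sub_cancel_right, hsymm.apply]

theorem diag_eq_zero (hM : AnnihilatesCycleColumns c M) (hc : 0 < c) (hc1 : c ≠ 1) (hn : Odd n)
    (hsymm : M.IsSymm) (h00 : M 0 0 = 0) (hdiag : ∀ a : Fin n, M 0 a.succ = M a.succ a.succ)
    (hadj : ∀ a : Fin n, M a.succ (a + 1).succ = 0) (a : Fin n) : M a.succ a.succ = 0 := by
  have hper (b : Fin n) : M (b + 1).succ (b + 1).succ = M b.succ b.succ :=
    Fin.periodic_one_of_periodic_two (f := fun b ↦ M b.succ b.succ)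
      (hM.diag_add_two hc.ne' hc1 hsymm hdiag hadj) hn b
  have h := hM 0 a
  rw [h00, hdiag, hdiag, hdiag, hper a, ← hper (a - 1), sub_add_cancel] at h
  have h' : (1 + 2 * c) * M a.succ a.succ = 0 := by linear_combination h
  exact (mul_eq_zero.mp h').resolve_left (by positivity)

theorem eq_zero (hM : AnnihilatesCycleColumns c M) (hc : 0 < c) (hc1 : c ≠ 1) (hn : Odd n)
    (hsymm : M.IsSymm) (h00 : M 0 0 = 0) (hdiag : ∀ a : Fin n, M 0 a.succ = M a.succ a.succ)
    (hadj : ∀ a : Fin n, M a.succ (a + 1).succ = 0) : M = 0 := by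
  have hμ := hM.diag_eq_zero hc hc1 hn hsymm h00 hdiag hadj
  have hborder (a : Fin n) : M a.succ 0 = 0 := by rw [hsymm.apply, hdiag, hμ]
  ext i j
  cases i using Fin.cases with
  | zero => cases j using Fin.cases with
    | zero => exact h00
    | succ b => rw [hdiag, hμ, Matrix.zero_apply]
  | succ a => cases j using Fin.cases with
    | zero => rw [hborder, Matrix.zero_apply]
    | succ b => exact hM.apply_eq_zero_of_consecutive hc.ne' (hborder a) (hμ a) (hadj a) b

end AnnihilatesCycleColumns

theorem kcbsDual_zero_succ {n : ℕ} (b : Fin n) : kcbsDual n 0 b.succ = -1 := by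
  simp [kcbsDual]

theorem kcbsDual_succ_succ {n : ℕ} [NeZero n] (a b : Fin n) :
    kcbsDual n a.succ b.succ =
      if a = b then 1 else if b = a + 1 ∨ a = b + 1 then kcbsWeight n else 0 := by
  dsimp only [kcbsDual]
  rw [← Fin.val_succ_add_one, ← Fin.val_succ_add_one]
  simp [Fin.val_inj, kcbsWeight, kcbsTheta]

theorem mul_kcbsDual_apply_succ {n : ℕ} [NeZero n] (hn : 3 ≤ n)
    (M : Matrix (Fin (n + 1)) (Fin (n + 1)) ℝ) (i : Fin (n + 1)) (b : Fin n) :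
    (M * kcbsDual n) i b.succ =
      M i b.succ + kcbsWeight n * (M i (b - 1).succ + M i (b + 1).succ) - M i 0 := by
  have hZ (a : Fin n) : kcbsDual n a.succ b.succ = (if a = b then 1 else 0) +
      ((if a = b - 1 then kcbsWeight n else 0) + (if a = b + 1 then kcbsWeight n else 0)) := by
    have h1 : b - 1 ≠ b := by simp; omega
    have h2 : b + 1 ≠ b := by simp; omega
    have h3 := Fin.add_one_ne_sub_one hn b
    rw [kcbsDual_succ_succ]
    split_ifs <;> simp_all
  simp only [Matrix.mul_apply, Fin.sum_univ_succ, kcbsDual_zero_succ, hZ, mul_add, mul_ite,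
    mul_one, mul_zero, Finset.sum_add_distrib, Finset.sum_ite_eq', Finset.mem_univ, if_true]
  ring

theorem AnnihilatesCycleColumns.of_mul_kcbsDual_eq_zero {n : ℕ} [NeZero n] (hn : 3 ≤ n)
    {M : Matrix (Fin (n + 1)) (Fin (n + 1)) ℝ} (hMZ : M * kcbsDual n = 0) :
    AnnihilatesCycleColumns (kcbsWeight n) M := fun i b ↦ by
  simpa [mul_kcbsDual_apply_succ hn, sub_eq_zero] using congrFun₂ hMZ i b.succ

end

/-- For odd `n ≥ 5`, the only symmetric matrix `M` with `M₀₀ = 0`,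
`M_{0i} = M_{ii}`, `M_{i,i+1 mod n} = 0` (on the cycle `{1,…,n}`) and `M Z_n = 0`
is `M = 0`; i.e. `Z_n` is dual nondegenerate. -/
theorem kcbsDual_nondegenerate (n : ℕ) (hn : 5 ≤ n) (hodd : Odd n)
    (M : Matrix (Fin (n + 1)) (Fin (n + 1)) ℝ) (hsymm : M.IsSymm)
    (h00 : M 0 0 = 0)
    (hdiag : ∀ i : Fin (n + 1), i ≠ 0 → M 0 i = M i i)
    (hadj : ∀ i j : Fin (n + 1), i.val ≠ 0 → j.val = i.val % n + 1 → M i j = 0)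
    (hMZ : M * kcbsDual n = 0) :
    M = 0 := by
  have : NeZero n := ⟨by omega⟩
  obtain ⟨hc, hc1⟩ := kcbsWeight_mem_Ioo (by omega : 4 ≤ n)
  exact (AnnihilatesCycleColumns.of_mul_kcbsDual_eq_zero (by omega) hMZ).eq_zero hc hc1.ne hodd
    hsymm h00 (fun a ↦ hdiag _ a.succ_ne_zero)
    (fun a ↦ hadj _ _ (Nat.succ_ne_zero a) (Fin.val_succ_add_one a))
end

section
/- For any odd integer n ≥ 3, define |u₀⟩ = (1,0,0)ᵀ and |u_j⟩ = (cos θ, sin θ sin φ_j, sin θ cos φ_j)ᵀ for 1 ≤ j ≤ n, where cos²θ = cos(π/n)/(1+cos(π/n)) and φ_j = jπ(n−1)/n. Then ⟨u_j | u_{j+1 mod n}⟩ = 0 for all 1 ≤ j ≤ n (cyclically), i.e., consecutive vectors are orthogonal. -/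
/-!
Every `u_j` with `j ≥ 1` lies on the cone of half-angle `θ` about `u₀`, so
`⟨u_j, u_k⟩ = cos²θ + sin²θ cos(φ_j - φ_k)`. Since `n` is odd, `nα = (n-1)π` is a multiple of
`2π` for `α = π(n-1)/n`, so the phases `φ_j = jα` are `n`-periodic modulo `2π` and cyclically
consecutive ones differ by `α`, with `cos α = -cos(π/n)`. The choice of `θ` is exactly
`cos²θ = sin²θ cos(π/n)`.
-/

open Real

/-- The canonical KCBS vectors in `ℝ³`: `u 0 = (1,0,0)` and
`u j = (cos θ, sin θ sin φ_j, sin θ cos φ_j)` with `φ_j = jπ(n−1)/n`. -/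
noncomputable def kcbsVec (n : ℕ) (θ : ℝ) (j : ℕ) : Fin 3 → ℝ :=
  if j = 0 then ![1, 0, 0]
  else ![Real.cos θ, Real.sin θ * Real.sin (j * π * (n - 1) / n),
         Real.sin θ * Real.cos (j * π * (n - 1) / n)]

noncomputable def conePoint (θ φ : ℝ) : Fin 3 → ℝ :=
  ![cos θ, sin θ * sin φ, sin θ * cos φ]

theorem sum_conePoint_mul_conePoint (θ a b : ℝ) :
    ∑ k : Fin 3, conePoint θ a k * conePoint θ b k = cos θ ^ 2 + sin θ ^ 2 * cos (a - b) := by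
  simp only [conePoint, Fin.sum_univ_three, Matrix.cons_val_zero, Matrix.cons_val_one,
    Matrix.cons_val_two, Matrix.head_cons, Matrix.tail_cons, cos_sub]
  ring

theorem kcbsVec_of_ne_zero (n : ℕ) (θ : ℝ) {j : ℕ} (hj : j ≠ 0) :
    kcbsVec n θ j = conePoint θ (j * π * (n - 1) / n) :=
  if_neg hj

theorem cos_kcbs_phase_sub_next {n : ℕ} (hodd : Odd n) (j : ℕ) :
    cos (j * π * (n - 1) / n - ((j % n + 1 : ℕ) : ℝ) * π * (n - 1) / n) = -cos (π / n) := by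
  obtain ⟨m, rfl⟩ := hodd
  have hj : (j : ℝ) = (2 * m + 1 : ℕ) * (j / (2 * m + 1) : ℕ) + (j % (2 * m + 1) : ℕ) := by
    exact_mod_cast (Nat.div_add_mod j (2 * m + 1)).symm
  have hphase : (j : ℝ) * π * ((2 * m + 1 : ℕ) - 1) / (2 * m + 1 : ℕ)
        - ((j % (2 * m + 1) + 1 : ℕ) : ℝ) * π * ((2 * m + 1 : ℕ) - 1) / (2 * m + 1 : ℕ)
      = π / (2 * m + 1 : ℕ) - π + (j / (2 * m + 1) * m : ℕ) * (2 * π) := by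
    rw [hj]
    field_simp
    push_cast
    ring
  rw [hphase, cos_add_nat_mul_two_pi, ← cos_neg, neg_sub, cos_pi_sub]

theorem one_add_cos_pi_div_ne_zero {n : ℕ} (hn : 2 ≤ n) : 1 + cos (π / n) ≠ 0 := by
  have hn' : (2 : ℝ) ≤ n := by exact_mod_cast hn
  have hle : π / n ≤ π / 2 := div_le_div_of_nonneg_left pi_pos.le two_pos hn'
  have hpos : 0 ≤ π / n := by positivity
  have := cos_nonneg_of_mem_Icc ⟨by linarith [pi_pos], hle⟩
  positivity

theorem cos_sq_eq_sin_sq_mul_of_cos_sq_eq_div {θ c : ℝ} (hc : 1 + c ≠ 0)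
    (hθ : cos θ ^ 2 = c / (1 + c)) : cos θ ^ 2 = sin θ ^ 2 * c := by
  rw [sin_sq, hθ]
  field_simp
  ring

/-- For odd `n ≥ 3` and `θ` with `cos²θ = cos(π/n)/(1+cos(π/n))`,
cyclically consecutive KCBS vectors are orthogonal:
`⟨u_j, u_{j+1 mod n}⟩ = 0` for all `1 ≤ j ≤ n`. -/
theorem kcbsVec_consecutive_orthogonal (n : ℕ) (hn : 3 ≤ n) (hodd : Odd n) (θ : ℝ)
    (hθ : Real.cos θ ^ 2 = Real.cos (π / n) / (1 + Real.cos (π / n))) :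
    ∀ j : ℕ, 1 ≤ j → j ≤ n →
      ∑ k : Fin 3, kcbsVec n θ j k * kcbsVec n θ (j % n + 1) k = 0 := by
  intro j hj _
  have hcone := cos_sq_eq_sin_sq_mul_of_cos_sq_eq_div (one_add_cos_pi_div_ne_zero (by omega)) hθ
  rw [kcbsVec_of_ne_zero n θ (by omega), kcbsVec_of_ne_zero n θ (Nat.succ_ne_zero _),
    sum_conePoint_mul_conePoint, cos_kcbs_phase_sub_next hodd, hcone]
  ring
end

section
/- Let u₀, u₁, …, u_n be the canonical KCBS vectors in ℝ³ for odd n ≥ 3 (u₀ = (1,0,0), u_j = (cos θ, sin θ sin φ_j, sin θ cos φ_j) with cos²θ = cos(π/n)/(1+cos(π/n)), φ_j = jπ(n−1)/n). Then the Gram matrix X* of the vectors u₀, ⟨u₀|u₁⟩u₁, …, ⟨u₀|u_n⟩u_n is a feasible solution of the Lovász theta SDP for C_n (X*₀₀ = 1, X*_{ii} = X*_{0i} for all i, X*_{i,i+1 mod n} = 0) with objective value ∑_{i=1}^n X*_{ii} = n cos(π/n)/(1+cos(π/n)). -/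
/-!
`X*` is a Gram matrix, hence positive semidefinite. For `i ≥ 1` both `X*_{0i}` and `X*_{ii}` equal
`cos² θ`, so the objective is `n cos² θ`. Cyclically consecutive KCBS vectors have azimuths differing
by `π − π/n` (modulo `2π`, using that `n` is odd for the pair `(u_n, u_1)`), so
`⟨u_i|u_{i+1}⟩ = cos² θ − sin² θ cos(π/n)`, which vanishes exactly when
`cos² θ (1 + cos(π/n)) = cos(π/n)`.
-/

open Real

/-- Dot product on `ℝ³`. -/
noncomputable def dot3 (a b : Fin 3 → ℝ) : ℝ := ∑ k, a k * b k

/-- The rescaled vectors `v₀ = u₀`, `v_i = ⟨u₀|u_i⟩ u_i`. -/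
noncomputable def kcbsGramVec (n : ℕ) (θ : ℝ) (i : Fin (n + 1)) : Fin 3 → ℝ :=
  if i.val = 0 then kcbsVec n θ 0
  else dot3 (kcbsVec n θ 0) (kcbsVec n θ i.val) • kcbsVec n θ i.val

/-- The Gram matrix `X*` of the vectors `v₀, v₁, …, v_n`. -/
noncomputable def kcbsGram (n : ℕ) (θ : ℝ) : Matrix (Fin (n + 1)) (Fin (n + 1)) ℝ :=
  fun i j => dot3 (kcbsGramVec n θ i) (kcbsGramVec n θ j)

open Matrix

theorem dot3_smul_left (a : ℝ) (v w : Fin 3 → ℝ) : dot3 (a • v) w = a * dot3 v w :=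
  smul_dotProduct a v w

theorem dot3_smul_right (a : ℝ) (v w : Fin 3 → ℝ) : dot3 v (a • w) = a * dot3 v w :=
  dotProduct_smul a v w

theorem one_add_cos_pi_div_pos {n : ℕ} (hn : 2 ≤ n) : 0 < 1 + cos (π / n) := by
  have hle : π / n ≤ π / 2 :=
    div_le_div_of_nonneg_left pi_pos.le two_pos (by exact_mod_cast hn)
  have : 0 ≤ cos (π / n) :=
    cos_nonneg_of_mem_Icc ⟨by linarith [pi_pos, div_nonneg pi_pos.le n.cast_nonneg], hle⟩
  linarith

noncomputable def kcbsAngle (n j : ℕ) : ℝ := j * π * (n - 1) / n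

theorem kcbsVec_zero (n : ℕ) (θ : ℝ) : kcbsVec n θ 0 = ![1, 0, 0] := if_pos rfl

theorem kcbsVec_of_ne_zero_s19 (n : ℕ) (θ : ℝ) {j : ℕ} (hj : j ≠ 0) :
    kcbsVec n θ j = ![cos θ, sin θ * sin (kcbsAngle n j), sin θ * cos (kcbsAngle n j)] :=
  if_neg hj

theorem dot3_kcbsVec_zero_zero (n : ℕ) (θ : ℝ) : dot3 (kcbsVec n θ 0) (kcbsVec n θ 0) = 1 := by
  simp [dot3, kcbsVec_zero, Fin.sum_univ_three]

theorem dot3_kcbsVec_zero (n : ℕ) (θ : ℝ) {j : ℕ} (hj : j ≠ 0) :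
    dot3 (kcbsVec n θ 0) (kcbsVec n θ j) = cos θ := by
  simp [dot3, kcbsVec_zero, kcbsVec_of_ne_zero_s19 n θ hj, Fin.sum_univ_three]

theorem dot3_kcbsVec (n : ℕ) (θ : ℝ) {i j : ℕ} (hi : i ≠ 0) (hj : j ≠ 0) :
    dot3 (kcbsVec n θ i) (kcbsVec n θ j)
      = cos θ ^ 2 + sin θ ^ 2 * cos (kcbsAngle n i - kcbsAngle n j) := by
  simp [dot3, kcbsVec_of_ne_zero_s19 n θ hi, kcbsVec_of_ne_zero_s19 n θ hj, Fin.sum_univ_three, cos_sub]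
  ring

theorem cos_kcbsAngle_sub_succ_mod {n : ℕ} (hodd : Odd n) {i : ℕ} (hi : i ≤ n) :
    cos (kcbsAngle n i - kcbsAngle n (i % n + 1)) = -cos (π / n) := by
  obtain ⟨m, rfl⟩ := hodd
  have hn : ((2 * m + 1 : ℕ) : ℝ) ≠ 0 := by positivity
  rcases hi.lt_or_eq with hlt | rfl
  · rw [Nat.mod_eq_of_lt hlt, ← cos_neg, ← cos_pi_sub]
    congr 1
    simp only [kcbsAngle]
    field_simp
    push_cast
    ring
  -- `φ_n − φ_1 = (n − 2)π + π/n` with `n − 2` odd.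
  · rw [Nat.mod_self, ← cos_add_pi, ← cos_add_int_mul_two_pi (π / _ + π) ((m : ℤ) - 1)]
    congr 1
    simp only [kcbsAngle]
    field_simp
    push_cast
    ring

theorem kcbsGramVec_zero (n : ℕ) (θ : ℝ) : kcbsGramVec n θ 0 = kcbsVec n θ 0 := if_pos rfl

theorem kcbsGramVec_of_ne_zero (n : ℕ) (θ : ℝ) {i : Fin (n + 1)} (hi : i.val ≠ 0) :
    kcbsGramVec n θ i = cos θ • kcbsVec n θ i := by
  rw [kcbsGramVec, if_neg hi, dot3_kcbsVec_zero n θ hi]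

theorem kcbsGram_posSemidef (n : ℕ) (θ : ℝ) : (kcbsGram n θ).PosSemidef := by
  have : kcbsGram n θ = gram ℝ fun i => WithLp.toLp 2 (kcbsGramVec n θ i) := by
    ext i j
    exact dotProduct_comm _ _
  exact this ▸ posSemidef_gram ℝ _

theorem kcbsGram_zero_zero (n : ℕ) (θ : ℝ) : kcbsGram n θ 0 0 = 1 := by
  rw [kcbsGram, kcbsGramVec_zero, dot3_kcbsVec_zero_zero]

theorem kcbsGram_zero_apply (n : ℕ) (θ : ℝ) {i : Fin (n + 1)} (hi : i.val ≠ 0) :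
    kcbsGram n θ 0 i = cos θ ^ 2 := by
  rw [kcbsGram, kcbsGramVec_zero, kcbsGramVec_of_ne_zero n θ hi, dot3_smul_right,
    dot3_kcbsVec_zero n θ hi, sq]

theorem kcbsGram_apply (n : ℕ) (θ : ℝ) {i j : Fin (n + 1)} (hi : i.val ≠ 0) (hj : j.val ≠ 0) :
    kcbsGram n θ i j
      = cos θ ^ 2 * (cos θ ^ 2 + sin θ ^ 2 * cos (kcbsAngle n i - kcbsAngle n j)) := by
  rw [kcbsGram, kcbsGramVec_of_ne_zero n θ hi, kcbsGramVec_of_ne_zero n θ hj, dot3_smul_left,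
    dot3_smul_right, dot3_kcbsVec n θ hi hj, ← mul_assoc, sq]

theorem kcbsGram_apply_self (n : ℕ) (θ : ℝ) {i : Fin (n + 1)} (hi : i.val ≠ 0) :
    kcbsGram n θ i i = cos θ ^ 2 := by
  rw [kcbsGram_apply n θ hi hi, sub_self, cos_zero, mul_one, cos_sq_add_sin_sq, mul_one]

/-- For odd `n ≥ 3` and `θ` with `cos²θ = cos(π/n)/(1+cos(π/n))`, the
Gram matrix `X*` of `u₀, ⟨u₀|u₁⟩u₁, …, ⟨u₀|u_n⟩u_n` is a feasible solution of the
Lovász theta SDP for `C_n` with objective value `n cos(π/n)/(1+cos(π/n))`. -/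
theorem kcbsGram_feasible_optimal (n : ℕ) (hn : 3 ≤ n) (hodd : Odd n) (θ : ℝ)
    (hθ : Real.cos θ ^ 2 = Real.cos (π / n) / (1 + Real.cos (π / n))) :
    (kcbsGram n θ).PosSemidef ∧
      kcbsGram n θ 0 0 = 1 ∧
      (∀ i : Fin (n + 1), i ≠ 0 → kcbsGram n θ i i = kcbsGram n θ 0 i) ∧
      (∀ i j : Fin (n + 1), i.val ≠ 0 → j.val = i.val % n + 1 → kcbsGram n θ i j = 0) ∧
      ∑ i ∈ Finset.univ.erase (0 : Fin (n + 1)), kcbsGram n θ i i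
        = n * Real.cos (π / n) / (1 + Real.cos (π / n)) := by
  have hcos_sq : cos θ ^ 2 * (1 + cos (π / n)) = cos (π / n) := by
    rw [hθ, div_mul_cancel₀ _ (one_add_cos_pi_div_pos (by omega)).ne']
  refine ⟨kcbsGram_posSemidef n θ, kcbsGram_zero_zero n θ, fun i hi => ?_, fun i j hi hj => ?_, ?_⟩
  · rw [kcbsGram_apply_self n θ (Fin.val_ne_zero_iff.mpr hi),
      kcbsGram_zero_apply n θ (Fin.val_ne_zero_iff.mpr hi)]
  · rw [kcbsGram_apply n θ hi (by omega), hj, cos_kcbsAngle_sub_succ_mod hodd (by omega), sin_sq]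
    linear_combination cos θ ^ 2 * hcos_sq
  · rw [Finset.sum_congr rfl fun i hi =>
        kcbsGram_apply_self n θ (Fin.val_ne_zero_iff.mpr (Finset.ne_of_mem_erase hi)),
      Finset.sum_const, Finset.card_erase_of_mem (Finset.mem_univ _), Finset.card_univ,
      Fintype.card_fin, Nat.add_sub_cancel, nsmul_eq_mul, hθ, mul_div_assoc]
end
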